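/- arXiv:2412.00659 — 2 statements merged into one kernel-verified Lean document; each statement's English description precedes it below -/
import Mathlib

section
/- Let F : ℝ^m × ℝ^n → ℝ^m, v_* : ℝ^m → ℝ^n, G : ℝ^m → ℝ^m with G(ω) = F(ω, v_*(ω)) for all ω, let ω* ∈ ℝ^m, and let μ_f > 0, H_v > 0. Assume (i) ⟨G(ω), ω − ω*⟩ ≥ (μ_f/2)‖ω − ω*‖² for all ω (a consequence of μ_f-strong convexity of f_* with minimizer ω*), and (ii) ‖F(ω, v) − F(ω, v')‖ ≤ H_v ‖v − v'‖ for all ω, v, v'. Then for all ω ∈ ℝ^m and v ∈ ℝ^n, ⟨F(ω, v), ω − ω*⟩ ≥ (3μ_f/8)‖ω − ω*‖² − (2H_v²/μ_f)‖v − v_*(ω)‖². -/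
open RealInnerProductSpace

/-- Lemma 3.3, inequality (6) of the paper: if `G(ω) = F(ω, v_*(ω))` satisfies the strong
monotonicity bound at the minimizer `ω*` and `F` is `H_v`-Lipschitz in `v`, then
`⟨F(ω,v), ω − ω*⟩ ≥ (3μ_f/8)‖ω − ω*‖² − (2H_v²/μ_f)‖v − v_*(ω)‖²`. -/
theorem approx_gradient_lower_bound
    {m n : ℕ}
    (F : EuclideanSpace ℝ (Fin m) → EuclideanSpace ℝ (Fin n) → EuclideanSpace ℝ (Fin m))
    (vstar : EuclideanSpace ℝ (Fin m) → EuclideanSpace ℝ (Fin n))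
    (G : EuclideanSpace ℝ (Fin m) → EuclideanSpace ℝ (Fin m))
    (ωstar : EuclideanSpace ℝ (Fin m))
    (μf Hv : ℝ) (hμf : 0 < μf) (hHv : 0 < Hv)
    (hG : ∀ ω, G ω = F ω (vstar ω))
    (hsc : ∀ ω, ⟪G ω, ω - ωstar⟫ ≥ μf / 2 * ‖ω - ωstar‖ ^ 2)
    (hlip : ∀ ω v v', ‖F ω v - F ω v'‖ ≤ Hv * ‖v - v'‖) :
    ∀ (ω : EuclideanSpace ℝ (Fin m)) (v : EuclideanSpace ℝ (Fin n)),
      ⟪F ω v, ω - ωstar⟫ ≥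
        3 * μf / 8 * ‖ω - ωstar‖ ^ 2 - 2 * Hv ^ 2 / μf * ‖v - vstar ω‖ ^ 2 := by
  intro ω v
  set d := ω - ωstar with hd
  have hsplit : ⟪F ω v, d⟫ = ⟪G ω, d⟫ + ⟪F ω v - F ω (vstar ω), d⟫ := by
    rw [hG, inner_sub_left]; ring
  have hcs : |⟪F ω v - F ω (vstar ω), d⟫| ≤ Hv * ‖v - vstar ω‖ * ‖d‖ := by
    calc |⟪F ω v - F ω (vstar ω), d⟫| ≤ ‖F ω v - F ω (vstar ω)‖ * ‖d‖ :=
          abs_real_inner_le_norm _ _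
      _ ≤ Hv * ‖v - vstar ω‖ * ‖d‖ :=
          mul_le_mul_of_nonneg_right (hlip ω v (vstar ω)) (norm_nonneg _)
  have hamgm : Hv * ‖v - vstar ω‖ * ‖d‖ ≤
      μf / 8 * ‖d‖ ^ 2 + 2 * Hv ^ 2 / μf * ‖v - vstar ω‖ ^ 2 := by
    have key : 0 ≤ (μf / 2 * ‖d‖ - 2 * Hv * ‖v - vstar ω‖) ^ 2 / (2 * μf) :=
      div_nonneg (sq_nonneg _) (by positivity)
    have h2 : (μf / 2 * ‖d‖ - 2 * Hv * ‖v - vstar ω‖) ^ 2 / (2 * μf) =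
        μf / 8 * ‖d‖ ^ 2 + 2 * Hv ^ 2 / μf * ‖v - vstar ω‖ ^ 2
          - Hv * ‖v - vstar ω‖ * ‖d‖ := by
      field_simp
      ring
    linarith [key, h2 ▸ key]
  have habs : -(Hv * ‖v - vstar ω‖ * ‖d‖) ≤ ⟪F ω v - F ω (vstar ω), d⟫ := by
    have := neg_abs_le (⟪F ω v - F ω (vstar ω), d⟫ : ℝ)
    linarith
  have := hsc ω
  rw [hsplit]
  linarith
end

section
/- Let g_v : ℝ^m × ℝ^n → ℝ^n, v_* : ℝ^m → ℝ^n, F : ℝ^m × ℝ^n → ℝ^m, and constants μ_g, H, α, β > 0. Assume (i) ⟨g_v(ω, v), v − v_*(ω)⟩ ≥ (μ_g/2)‖v − v_*(ω)‖² for all ω, v (a consequence of μ_g-strong convexity of g(ω,·) with minimizer v_*(ω)); and (ii) v_* is (H/μ_g)-Lipschitz. Fix ω_k ∈ ℝ^m, v_k ∈ ℝ^n and set ω_{k+1} := ω_k − α F(ω_k, v_k). Then ⟨g_v(ω_k, v_k) + (1/β)(v_*(ω_{k+1}) − v_*(ω_k)), v_k − v_*(ω_k)⟩ ≥ (3μ_g/8)‖v_k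 − v_*(ω_k)‖² − (2α²H²/(β²μ_g³))‖F(ω_k, v_k)‖². -/
open RealInnerProductSpace

/-- Lemma 3.4, inequality (8) of the paper: with `ω_{k+1} = ω_k − α F(ω_k, v_k)`,
`⟨∇_v g(ω_k,v_k) + (1/β)(v_*(ω_{k+1}) − v_*(ω_k)), v_k − v_*(ω_k)⟩
  ≥ (3μ_g/8)‖v_k − v_*(ω_k)‖² − (2α²H²/(β²μ_g³))‖F(ω_k,v_k)‖²`. -/
theorem shifted_lower_gradient_lower_bound
    {m n : ℕ}
    (g_v : EuclideanSpace ℝ (Fin m) → EuclideanSpace ℝ (Fin n) → EuclideanSpace ℝ (Fin n))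
    (vstar : EuclideanSpace ℝ (Fin m) → EuclideanSpace ℝ (Fin n))
    (F : EuclideanSpace ℝ (Fin m) → EuclideanSpace ℝ (Fin n) → EuclideanSpace ℝ (Fin m))
    (μg H α β : ℝ) (hμg : 0 < μg) (hH : 0 < H) (hα : 0 < α) (hβ : 0 < β)
    (hsc : ∀ ω v, ⟪g_v ω v, v - vstar ω⟫ ≥ μg / 2 * ‖v - vstar ω‖ ^ 2)
    (hvstar : ∀ ω ω', ‖vstar ω - vstar ω'‖ ≤ H / μg * ‖ω - ω'‖)
    (ωk : EuclideanSpace ℝ (Fin m)) (vk : EuclideanSpace ℝ (Fin n)) :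
    ⟪g_v ωk vk + (1 / β) • (vstar (ωk - α • F ωk vk) - vstar ωk), vk - vstar ωk⟫ ≥
      3 * μg / 8 * ‖vk - vstar ωk‖ ^ 2
        - 2 * α ^ 2 * H ^ 2 / (β ^ 2 * μg ^ 3) * ‖F ωk vk‖ ^ 2 := by
  set e := vk - vstar ωk with he
  set Δ := vstar (ωk - α • F ωk vk) - vstar ωk with hΔ
  have h1 : ⟪g_v ωk vk, e⟫ ≥ μg / 2 * ‖e‖ ^ 2 := hsc ωk vk
  have h2 : ⟪Δ, e⟫ ≥ -(‖Δ‖ * ‖e‖) := by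
    have h := real_inner_le_norm (-Δ) e
    rw [inner_neg_left, norm_neg] at h
    linarith
  have h3 : ‖Δ‖ ≤ H / μg * (α * ‖F ωk vk‖) := by
    have h := hvstar (ωk - α • F ωk vk) ωk
    rw [hΔ]
    calc ‖vstar (ωk - α • F ωk vk) - vstar ωk‖ ≤ H / μg * ‖ωk - α • F ωk vk - ωk‖ := h
    _ = H / μg * (α * ‖F ωk vk‖) := by
        rw [sub_sub_cancel_left, norm_neg, norm_smul, Real.norm_eq_abs, abs_of_pos hα]
  have hexp : ⟪g_v ωk vk + (1 / β) • Δ, e⟫ = ⟪g_v ωk vk, e⟫ + (1 / β) * ⟪Δ, e⟫ := by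
    rw [inner_add_left, real_inner_smul_left]
  rw [hexp]
  have hΔ0 : (0:ℝ) ≤ ‖Δ‖ := norm_nonneg _
  have he0 : (0:ℝ) ≤ ‖e‖ := norm_nonneg _
  have hF0 : (0:ℝ) ≤ ‖F ωk vk‖ := norm_nonneg _
  -- Young: (1/β)‖Δ‖‖e‖ ≤ μg/8 ‖e‖² + 2/(β²μg) ‖Δ‖²
  have hyoung : (1 / β) * (‖Δ‖ * ‖e‖) ≤ μg / 8 * ‖e‖ ^ 2 + 2 / (β ^ 2 * μg) * ‖Δ‖ ^ 2 := by
    have hsq : 0 ≤ (Real.sqrt (μg / 8) * ‖e‖ - Real.sqrt (2 / (β ^ 2 * μg)) * ‖Δ‖) ^ 2 :=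
      sq_nonneg _
    have h8 : Real.sqrt (μg / 8) ^ 2 = μg / 8 :=
      Real.sq_sqrt (by positivity)
    have h2' : Real.sqrt (2 / (β ^ 2 * μg)) ^ 2 = 2 / (β ^ 2 * μg) :=
      Real.sq_sqrt (by positivity)
    have hprod : Real.sqrt (μg / 8) * Real.sqrt (2 / (β ^ 2 * μg)) = 1 / (2 * β) := by
      rw [← Real.sqrt_mul (by positivity)]
      have : μg / 8 * (2 / (β ^ 2 * μg)) = (1 / (2 * β)) ^ 2 := by
        field_simp; ring
      rw [this, Real.sqrt_sq (by positivity)]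
    have expand : (Real.sqrt (μg / 8) * ‖e‖ - Real.sqrt (2 / (β ^ 2 * μg)) * ‖Δ‖) ^ 2 =
        Real.sqrt (μg / 8) ^ 2 * ‖e‖ ^ 2
          - 2 * (Real.sqrt (μg / 8) * Real.sqrt (2 / (β ^ 2 * μg))) * (‖e‖ * ‖Δ‖)
          + Real.sqrt (2 / (β ^ 2 * μg)) ^ 2 * ‖Δ‖ ^ 2 := by ring
    rw [expand, h8, h2', hprod] at hsq
    have heq : 2 * (1 / (2 * β)) * (‖e‖ * ‖Δ‖) = 1 / β * (‖Δ‖ * ‖e‖) := by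
      field_simp
    linarith
  have hΔsq : ‖Δ‖ ^ 2 ≤ (H / μg) ^ 2 * α ^ 2 * ‖F ωk vk‖ ^ 2 := by
    nlinarith [h3, hΔ0, mul_nonneg (mul_nonneg (le_of_lt (div_pos hH hμg)) hα.le) hF0]
  have hbound : 2 / (β ^ 2 * μg) * ‖Δ‖ ^ 2 ≤
      2 * α ^ 2 * H ^ 2 / (β ^ 2 * μg ^ 3) * ‖F ωk vk‖ ^ 2 := by
    have hc : (0:ℝ) < 2 / (β ^ 2 * μg) := by positivity
    have := mul_le_mul_of_nonneg_left hΔsq hc.le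
    calc 2 / (β ^ 2 * μg) * ‖Δ‖ ^ 2
        ≤ 2 / (β ^ 2 * μg) * ((H / μg) ^ 2 * α ^ 2 * ‖F ωk vk‖ ^ 2) := this
      _ = 2 * α ^ 2 * H ^ 2 / (β ^ 2 * μg ^ 3) * ‖F ωk vk‖ ^ 2 := by
          field_simp
  have hβinv : (0:ℝ) ≤ 1 / β := by positivity
  have h2' : (1 / β) * ⟪Δ, e⟫ ≥ -((1 / β) * (‖Δ‖ * ‖e‖)) := by
    have := mul_le_mul_of_nonneg_left h2 hβinv
    nlinarith
  linarith
end
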